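/- Let k ≥ 3, let ε ∈ {−1, +1}ᵏ, let V ⊆ ℚᵏ be a ℚ-subspace with dim_ℚ V = k − 2, and let y ∈ ℝᵏ have all entries nonzero. Suppose that every w ∈ V satisfies both Σᵢ wᵢ yᵢ = 0 and Σᵢ wᵢ εᵢ yᵢ = 0. Then for any indices i, j, l with εᵢ = εⱼ and ε_l = −εᵢ, there exists q ∈ ℚ with yᵢ = q·yⱼ; that is, any two coordinates of y whose ε-signs agree have a rational ratio. -/

import Mathlib

/-!
Put `z t = (ε t - ε l) * y t`. The ℚ-linear map `f : ℚᵏ → ℝ`, `w ↦ ∑ wₜ zₜ`, kills `V` (a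
combination of the two relations) and also `e_l`, which is not in `V` because `y_l ≠ 0`. So its
kernel has dimension at least `k - 1`, its image is a ℚ-line in `ℝ`, and `z i = 2 ε i y i` and
`z j = 2 ε i y j ≠ 0` are rational multiples of one another.
-/

open Module LinearMap

section

variable {K M N : Type*} [Field K] [AddCommGroup M] [Module K M] [FiniteDimensional K M]
  [AddCommGroup N] [Module K N]

theorem LinearMap.finrank_range_add_finrank_lt_of_lt_ker (f : M →ₗ[K] N) {V : Submodule K M}
    (hV : V < ker f) : finrank K (range f) + finrank K V < finrank K M := by
  have := Submodule.finrank_lt_finrank_of_lt hV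
  have := f.finrank_range_add_finrank_ker
  omega

theorem LinearMap.exists_smul_eq_of_finrank_range_le_one (f : M →ₗ[K] N)
    (hf : finrank K (range f) ≤ 1) {a : M} (ha : f a ≠ 0) (b : M) :
    ∃ c : K, f b = c • f a := by
  obtain ⟨v, hv⟩ := finrank_le_one_iff.mp hf
  obtain ⟨ca, hca⟩ := hv ⟨f a, mem_range_self f a⟩
  obtain ⟨cb, hcb⟩ := hv ⟨f b, mem_range_self f b⟩
  have hca' : ca • (v : N) = f a := congrArg Subtype.val hca
  have hcb' : cb • (v : N) = f b := congrArg Subtype.val hcb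
  have hca0 : ca ≠ 0 := by
    rintro rfl
    exact ha (by simpa using hca'.symm)
  refine ⟨cb / ca, ?_⟩
  rw [← hca', ← hcb', smul_smul, div_mul_cancel₀ cb hca0]

theorem LinearMap.exists_smul_eq_of_lt_ker (f : M →ₗ[K] N) {V : Submodule K M}
    (hV : V < ker f) (hcodim : finrank K M ≤ finrank K V + 2) {a : M} (ha : f a ≠ 0)
    (b : M) : ∃ c : K, f b = c • f a := by
  have := f.finrank_range_add_finrank_lt_of_lt_ker hV
  exact f.exists_smul_eq_of_finrank_range_le_one (by omega) ha b

end

theorem stmt3_general (k : ℕ)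
    (ε : Fin k → ℝ) (hε : ∀ i, ε i = 1 ∨ ε i = -1)
    (V : Submodule ℚ (Fin k → ℚ)) (hV : Module.finrank ℚ V = k - 2)
    (y : Fin k → ℝ) (hy : ∀ i, y i ≠ 0)
    (h1 : ∀ w ∈ V, ∑ i, (w i : ℝ) * y i = 0)
    (h2 : ∀ w ∈ V, ∑ i, (w i : ℝ) * ε i * y i = 0) :
    ∀ i j l : Fin k, ε i = ε j → ε l = -ε i → ∃ q : ℚ, y i = (q : ℝ) * y j := by
  intro i j l hij hεl
  set f := Fintype.linearCombination ℚ (fun t => (ε t - ε l) * y t)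
  have hf (t : Fin k) : f (Pi.single t 1) = (ε t - ε l) * y t := by
    simp [f, Fintype.linearCombination_apply_single]
  have hVf : V ≤ ker f := by
    intro w hw
    calc f w = ∑ t, (w t : ℝ) * ε t * y t - ε l * ∑ t, (w t : ℝ) * y t := by
          simp only [f, Fintype.linearCombination_apply, Rat.smul_def, Finset.mul_sum,
            ← Finset.sum_sub_distrib]
          exact Finset.sum_congr rfl fun t _ => by ring
      _ = 0 := by rw [h1 w hw, h2 w hw, mul_zero, sub_zero]
  have hl_notMem : Pi.single l 1 ∉ V := fun h =>
    hy l (by simpa [Pi.single_apply, apply_ite] using h1 _ h)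
  have hεi : ε i - ε l ≠ 0 := by rcases hε i with h | h <;> rw [hεl, h] <;> norm_num
  obtain ⟨q, hq⟩ := f.exists_smul_eq_of_lt_ker
    (SetLike.lt_iff_le_and_exists.mpr ⟨hVf, Pi.single l 1, by simp [hf], hl_notMem⟩)
    (by rw [finrank_fin_fun, hV]; omega) (a := Pi.single j 1) (by simp [hf, ← hij, hεi, hy j])
    (Pi.single i 1)
  refine ⟨q, mul_left_cancel₀ hεi ?_⟩
  simpa [hf, ← hij, Rat.smul_def, mul_left_comm] using hq

/-- Let `k ≥ 3`, `ε ∈ {−1,+1}ᵏ`, `V ⊆ ℚᵏ` a ℚ-subspace of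
dimension `k − 2`, and `y ∈ ℝᵏ` with all entries nonzero.  If every `w ∈ V`
satisfies `Σᵢ wᵢ yᵢ = 0` and `Σᵢ wᵢ εᵢ yᵢ = 0`, then for any indices `i, j, l`
with `εᵢ = εⱼ` and `ε_l = −εᵢ`, there exists `q ∈ ℚ` with `yᵢ = q yⱼ`. -/
theorem stmt3 (k : ℕ) (hk : 3 ≤ k)
    (ε : Fin k → ℝ) (hε : ∀ i, ε i = 1 ∨ ε i = -1)
    (V : Submodule ℚ (Fin k → ℚ)) (hV : Module.finrank ℚ V = k - 2)
    (y : Fin k → ℝ) (hy : ∀ i, y i ≠ 0)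
    (h1 : ∀ w ∈ V, ∑ i, (w i : ℝ) * y i = 0)
    (h2 : ∀ w ∈ V, ∑ i, (w i : ℝ) * ε i * y i = 0) :
    ∀ i j l : Fin k, ε i = ε j → ε l = -ε i → ∃ q : ℚ, y i = (q : ℝ) * y j :=
  stmt3_general k ε hε V hV y hy h1 h2
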